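/- The sequence v_n := 2n·[Λ(π/4 + π/(2n)) + Λ(π/4 - π/(2n))] is strictly increasing in n for n ≥ 3. -/

import Mathlib

open Real

noncomputable def Λ (θ : ℝ) : ℝ := -∫ t in (0:ℝ)..θ, Real.log |2 * Real.sin t|

/-!
Since `Λ' θ = -log (2 sin θ)` is strictly decreasing on `(0, π/2)`, `Λ` is strictly concave
on `[0, π/2]`; it vanishes at both ends (at `π/2` by `∫₀^{π/2} log sin = -(π/2) log 2`), so
`Λ (π/4) > 0`. Hence `g x = Λ (π/4 + x) + Λ (π/4 - x)` is concave on `[-π/4, π/4]` with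
`g 0 > 0`, and for such a function `g x / x` is strictly decreasing on `(0, π/4]`. Finally
`v_n = π · g x / x` at `x = π / (2n)`, which decreases in `n`.
-/

open MeasureTheory Set

theorem intervalIntegrable_log_abs_two_mul_sin (a b : ℝ) :
    IntervalIntegrable (fun t => log |2 * sin t|) volume a b :=
  (analyticOnNhd_const.mul analyticOnNhd_sin).meromorphicOn.intervalIntegrable_log_norm

theorem continuous_Λ : Continuous Λ :=
  (intervalIntegral.continuous_primitive intervalIntegrable_log_abs_two_mul_sin 0).neg

theorem hasDerivAt_Λ {θ : ℝ} (hθ : sin θ ≠ 0) : HasDerivAt Λ (-log (2 * sin θ)) θ := by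
  rw [← log_abs]
  refine (intervalIntegral.integral_hasDerivAt_right (intervalIntegrable_log_abs_two_mul_sin _ _)
    (Measurable.aestronglyMeasurable (by fun_prop)).stronglyMeasurableAtFilter ?_).neg
  exact (continuous_sin.const_mul 2).continuousAt.abs.log (by simpa using hθ)

theorem Λ_zero : Λ 0 = 0 := by simp [Λ]

theorem Λ_pi_div_two : Λ (π / 2) = 0 := by
  have h : ∫ t in (0:ℝ)..π / 2, log |2 * sin t|
      = ∫ t in (0:ℝ)..π / 2, (log 2 + log (sin t)) := by
    refine intervalIntegral.integral_congr_ae (Filter.Eventually.of_forall fun t ht => ?_)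
    rw [uIoc_of_le (by positivity)] at ht
    have : 0 < sin t := sin_pos_of_pos_of_lt_pi ht.1 (by linarith [ht.2, pi_pos])
    rw [log_abs, log_mul two_ne_zero this.ne']
  rw [Λ, h, intervalIntegral.integral_add (f := fun _ => log 2) (g := fun t => log (sin t))
    intervalIntegrable_const intervalIntegrable_log_sin,
    intervalIntegral.integral_const, integral_log_sin_zero_pi_div_two]
  simp only [sub_zero, smul_eq_mul]
  ring

theorem strictConcaveOn_Λ : StrictConcaveOn ℝ (Icc 0 (π / 2)) Λ := by
  refine StrictAntiOn.strictConcaveOn_of_deriv (convex_Icc _ _) continuous_Λ.continuousOn ?_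
  rw [interior_Icc]
  intro x hx y hy hxy
  have hsin : ∀ z ∈ Ioo 0 (π / 2), 0 < sin z := fun z hz =>
    sin_pos_of_pos_of_lt_pi hz.1 (by linarith [hz.2, pi_pos])
  rw [(hasDerivAt_Λ (hsin x hx).ne').deriv, (hasDerivAt_Λ (hsin y hy).ne').deriv, neg_lt_neg_iff]
  refine log_lt_log (by linarith [hsin x hx]) ?_
  have := strictMonoOn_sin ⟨by linarith [hx.1, pi_pos], hx.2.le⟩
    ⟨by linarith [hy.1, pi_pos], hy.2.le⟩ hxy
  linarith

theorem Λ_pi_div_four_pos : 0 < Λ (π / 4) := by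
  have h := strictConcaveOn_Λ.2 (left_mem_Icc.2 (by positivity))
    (right_mem_Icc.2 (by positivity)) (by positivity : (0:ℝ) < π / 2).ne
    (by norm_num : (0:ℝ) < 1 / 2) (by norm_num : (0:ℝ) < 1 / 2) (by norm_num)
  simp only [smul_eq_mul, mul_zero, zero_add, Λ_zero, Λ_pi_div_two] at h
  rwa [show (1 / 2 : ℝ) * (π / 2) = π / 4 by ring] at h

theorem ConcaveOn.add_comp_reflect {f : ℝ → ℝ} {c r : ℝ}
    (hf : ConcaveOn ℝ (Icc (c - r) (c + r)) f) :
    ConcaveOn ℝ (Icc (-r) r) (fun x => f (c + x) + f (c - x)) := by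
  refine ⟨convex_Icc _ _, fun x hx y hy a b ha hb hab => ?_⟩
  have hmem : ∀ z ∈ Icc (-r) r,
      c + z ∈ Icc (c - r) (c + r) ∧ c - z ∈ Icc (c - r) (c + r) :=
    fun z hz => ⟨⟨by linarith [hz.1], by linarith [hz.2]⟩,
      ⟨by linarith [hz.2], by linarith [hz.1]⟩⟩
  have h1 := hf.2 (hmem x hx).1 (hmem y hy).1 ha hb hab
  have h2 := hf.2 (hmem x hx).2 (hmem y hy).2 ha hb hab
  have e1 : a • (c + x) + b • (c + y) = c + (a • x + b • y) := by
    simp only [smul_eq_mul]; linear_combination c * hab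
  have e2 : a • (c - x) + b • (c - y) = c - (a • x + b • y) := by
    simp only [smul_eq_mul]; linear_combination c * hab
  rw [e1] at h1; rw [e2] at h2
  simp only [smul_eq_mul] at h1 h2 ⊢
  linarith

theorem ConcaveOn.strictAntiOn_div_self {f : ℝ → ℝ} {s : Set ℝ} (hf : ConcaveOn ℝ s f)
    (h0 : 0 ∈ s) (hf0 : 0 < f 0) : StrictAntiOn (fun x => f x / x) (s ∩ Ioi 0) := by
  rintro y ⟨-, hy : 0 < y⟩ x ⟨hx, -⟩ hyx
  have hx0 : 0 < x := hy.trans hyx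
  have hcomb := hf.2 h0 hx (div_pos (sub_pos.2 hyx) hx0).le (div_pos hy hx0).le
    (by field_simp; ring)
  have hy_eq : ((x - y) / x) • (0 : ℝ) + (y / x) • x = y := by
    rw [smul_zero, zero_add, smul_eq_mul, div_mul_cancel₀ _ hx0.ne']
  rw [hy_eq, smul_eq_mul, smul_eq_mul] at hcomb
  have hchord : (x - y) * f 0 + y * f x ≤ x * f y :=
    calc (x - y) * f 0 + y * f x = x * ((x - y) / x * f 0 + y / x * f x) := by field_simp
      _ ≤ x * f y := by gcongr
  rw [div_lt_div_iff₀ hx0 hy]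
  nlinarith [mul_pos (sub_pos.2 hyx) hf0]

theorem concaveOn_Λ_add_Λ_reflect :
    ConcaveOn ℝ (Icc (-(π / 4)) (π / 4)) (fun x => Λ (π / 4 + x) + Λ (π / 4 - x)) := by
  refine ConcaveOn.add_comp_reflect ?_
  rw [sub_self, show π / 4 + π / 4 = π / 2 by ring]
  exact strictConcaveOn_Λ.concaveOn

theorem antiprism_volume_strictMono (n : ℕ) (hn : 3 ≤ n) :
    2 * (n : ℝ) * (Λ (π / 4 + π / (2 * n)) + Λ (π / 4 - π / (2 * n))) <
      2 * ((n : ℝ) + 1) * (Λ (π / 4 + π / (2 * (n + 1))) + Λ (π / 4 - π / (2 * (n + 1)))) := by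
  set g : ℝ → ℝ := fun x => Λ (π / 4 + x) + Λ (π / 4 - x)
  have hg0 : 0 < g 0 := by
    simp only [g, add_zero, sub_zero]
    linarith [Λ_pi_div_four_pos]
  have hanti := concaveOn_Λ_add_Λ_reflect.strictAntiOn_div_self
    ⟨by linarith [pi_pos], by linarith [pi_pos]⟩ hg0
  have hscale : ∀ m : ℝ, 0 < m →
      2 * m * g (π / (2 * m)) = π * (g (π / (2 * m)) / (π / (2 * m))) :=
    fun m hm => by field_simp
  have hmem : ∀ m : ℝ, 2 ≤ m → π / (2 * m) ∈ Icc (-(π / 4)) (π / 4) ∩ Ioi 0 := by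
    intro m hm
    have hpos : 0 < π / (2 * m) := by positivity
    refine ⟨⟨by linarith [pi_pos], ?_⟩, hpos⟩
    gcongr
    linarith
  have hn' : (3 : ℝ) ≤ n := by exact_mod_cast hn
  show 2 * (n : ℝ) * g (π / (2 * n)) < 2 * ((n : ℝ) + 1) * g (π / (2 * (n + 1)))
  rw [hscale _ (by linarith), hscale _ (by linarith)]
  refine mul_lt_mul_of_pos_left (hanti (hmem _ (by linarith)) (hmem _ (by linarith)) ?_) pi_pos
  gcongr
  linarith
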